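/- For every integer n ≥ 2, the rank of the direct power A_4^n of the alternating group A_4 equals n. -/

import Mathlib

/-!
Upper bound: if `a, b` generate `G` and `a ^ m = 1`, `b ^ m = b` (for `A₄`: a 3-cycle and a
double transposition, `m = 3`), then for a fixed-point-free permutation `σ` of the index set the
elements `xᵢ = aᵢ bσᵢ` generate `Gⁿ`, since `xᵢ ^ m = bσᵢ` and then `aᵢ = xᵢ bσᵢ⁻¹`.

Lower bound: `A₄` maps onto `A₄ / V₄ ≅ C₃`, so `A₄ⁿ` maps onto `C₃ⁿ`; an abelian group of exponent
`3` generated by `r` elements has at most `3 ^ r` elements, whence `r ≥ n`.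
-/

open Equiv Equiv.Perm Subgroup

theorem Subgroup.eq_top_of_mulSingle_mem {ι G : Type*} [Finite ι] [DecidableEq ι] [Group G]
    {s : Set G} (hs : closure s = ⊤) {H : Subgroup (ι → G)}
    (h : ∀ i, ∀ g ∈ s, Pi.mulSingle i g ∈ H) : H = ⊤ := by
  refine (eq_top_iff' _).2 fun f => pi_mem_of_mulSingle_mem f fun i => ?_
  have : closure s ≤ H.comap (MonoidHom.mulSingle _ i) := (closure_le _).2 (h i)
  exact this (hs ▸ mem_top (f i))

theorem Group.rank_pi_le_card_of_closure_pair {G ι : Type*} [Group G] [Finite G] [Fintype ι]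
    {a b : G} {m : ℕ}
    (hab : closure {a, b} = ⊤) (ha : a ^ m = 1) (hb : b ^ m = b)
    (σ : Perm ι) (hσ : ∀ i, σ i ≠ i) : Group.rank (ι → G) ≤ Fintype.card ι := by
  classical
  set x : ι → ι → G := fun i => Pi.mulSingle i a * Pi.mulSingle (σ i) b
  set H := closure (Set.range x)
  have hx_pow (i : ι) : x i ^ m = Pi.mulSingle (σ i) b := by
    rw [(Pi.mulSingle_commute (f := fun _ => G) (hσ i).symm a b).mul_pow, ← Pi.mulSingle_pow,
      ← Pi.mulSingle_pow, ha, hb, Pi.mulSingle_one, one_mul]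
  have hb_mem (j : ι) : Pi.mulSingle j b ∈ H := by
    obtain ⟨i, rfl⟩ := σ.surjective j
    exact hx_pow i ▸ pow_mem (subset_closure (Set.mem_range_self i)) m
  have ha_mem (i : ι) : Pi.mulSingle i a ∈ H := by
    simpa [x] using mul_mem (subset_closure (Set.mem_range_self i)) (inv_mem (hb_mem (σ i)))
  have hH : H = ⊤ := eq_top_of_mulSingle_mem hab fun i g hg => by
    rcases hg with rfl | rfl
    exacts [ha_mem i, hb_mem i]
  calc Group.rank (ι → G) ≤ (Finset.univ.image x).card :=
        Group.rank_le (by rwa [Finset.coe_image, Finset.coe_univ, Set.image_univ])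
    _ ≤ Fintype.card ι := Finset.card_image_le

theorem Group.card_le_rank_pi_multiplicative_zmod (p : ℕ) [hp : Fact p.Prime] (ι : Type*)
    [Fintype ι] :
    Fintype.card ι ≤ Group.rank (ι → Multiplicative (ZMod p)) := by
  have hdvd := card_dvd_exponent_pow_rank' (ι → Multiplicative (ZMod p)) (n := p)
    fun g => funext fun i => by simpa using pow_card_eq_one' (x := g i)
  rw [Nat.card_fun] at hdvd
  simpa [Nat.pow_dvd_pow_iff_le_right hp.out.one_lt] using hdvd

theorem Group.card_le_rank_pi_of_surjective {G : Type*} [Group G] [Finite G] {p : ℕ} [Fact p.Prime]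
    {f : G →* Multiplicative (ZMod p)} (hf : Function.Surjective f) (ι : Type*) [Fintype ι] :
    Fintype.card ι ≤ Group.rank (ι → G) :=
  (card_le_rank_pi_multiplicative_zmod p ι).trans
    (Group.rank_le_of_surjective (f.compLeft ι) hf.comp_left)

namespace alternatingGroup

theorem exists_closure_pair_eq_top_fin_four : ∃ a b : alternatingGroup (Fin 4),
    closure {a, b} = ⊤ ∧ a ^ 3 = 1 ∧ b ^ 3 = b := by
  let a : alternatingGroup (Fin 4) := ⟨c[0, 1, 2], mem_alternatingGroup.2 (by decide)⟩
  let b : alternatingGroup (Fin 4) := ⟨c[0, 1] * c[2, 3], mem_alternatingGroup.2 (by decide)⟩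
  have hdecomp : ∀ g : alternatingGroup (Fin 4), ∃ i j : Fin 3,
      g = a ^ (i : ℕ) ∨ g = a ^ (i : ℕ) * b * a ^ (j : ℕ) := by
    decide
  refine ⟨a, b, (eq_top_iff' _).2 fun g => ?_, by decide, by decide⟩
  have ha : a ∈ closure {a, b} := subset_closure (by simp)
  have hb : b ∈ closure {a, b} := subset_closure (by simp)
  obtain ⟨i, j, rfl | rfl⟩ := hdecomp g
  exacts [pow_mem ha _, mul_mem (mul_mem (pow_mem ha _) hb) (pow_mem ha _)]

theorem exists_surjective_fin_four_zmod_three :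
    ∃ f : alternatingGroup (Fin 4) →* Multiplicative (ZMod 3), Function.Surjective f := by
  have h4 : Nat.card (Fin 4) = 4 := Nat.card_fin 4
  have := normal_kleinFour h4
  have hQ : Nat.card (alternatingGroup (Fin 4) ⧸ kleinFour (Fin 4)) = 3 := by
    have hcard := (kleinFour (Fin 4)).card_mul_index
    rw [kleinFour_card_of_card_eq_four h4, nat_card_alternatingGroup, h4, index_eq_card] at hcard
    norm_num at hcard
    omega
  let e : _ ≃* Multiplicative (ZMod 3) := mulEquivOfPrimeCardEq hQ (Nat.card_zmod 3)
  exact ⟨e.toMonoidHom.comp (QuotientGroup.mk' _),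
    e.surjective.comp (QuotientGroup.mk'_surjective _)⟩

end alternatingGroup

/-- For every `n ≥ 2`, the rank of `A₄ⁿ` equals `n`. -/
theorem rank_pi_alternatingGroup_four (n : ℕ) (hn : 2 ≤ n) :
    Group.rank (Fin n → ↥(alternatingGroup (Fin 4))) = n := by
  obtain ⟨a, b, hab, ha, hb⟩ := alternatingGroup.exists_closure_pair_eq_top_fin_four
  obtain ⟨f, hf⟩ := alternatingGroup.exists_surjective_fin_four_zmod_three
  apply le_antisymm
  · have hσ (i : Fin n) : finRotate n i ≠ i :=
      mem_support.1 (support_finRotate_of_le hn ▸ Finset.mem_univ i)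
    simpa using Group.rank_pi_le_card_of_closure_pair hab ha hb (finRotate n) hσ
  · simpa using Group.card_le_rank_pi_of_surjective hf (Fin n)
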